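/- arXiv:0807.4041 — 6 statements merged into one kernel-verified Lean document; each statement's English description precedes it below -/
import Mathlib

section
/- For a function f such that the integrals converge absolutely, the iterated L₂-transform satisfies: ∫₀^∞ exp(-y²u²) (∫₀^∞ x exp(-x²u²) f(x) dx) du = (√π/2) ∫₀^∞ x f(x)/√(x²+y²) dx for all y > 0. -/
/-!
By Fubini the `u`-integral may be taken first; since
`exp (-y²u²) · exp (-x²u²) = exp (-(x² + y²) u²)`, it is the half-line Gaussian integral
`∫₀^∞ exp (-(x² + y²) u²) du = √π / (2 √(x² + y²))`.
-/

open MeasureTheory Real Set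

-- For `a + b ≤ 0` both sides are junk zeros.
theorem integral_exp_neg_mul_sq_mul_exp_neg_mul_sq_Ioi (a b : ℝ) :
    ∫ u in Ioi (0:ℝ), exp (-a * u ^ 2) * exp (-b * u ^ 2) = √π / 2 / √(a + b) := by
  simp_rw [← exp_add, ← add_mul, ← neg_add, integral_gaussian_Ioi, sqrt_div pi_pos.le]
  ring

theorem integral_exp_neg_sq_mul_L2_kernel_Ioi (x y c : ℝ) :
    ∫ u in Ioi (0:ℝ), exp (-y ^ 2 * u ^ 2) * (x * exp (-x ^ 2 * u ^ 2) * c)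
      = √π / 2 * (x * c / √(x ^ 2 + y ^ 2)) := by
  calc ∫ u in Ioi (0:ℝ), exp (-y ^ 2 * u ^ 2) * (x * exp (-x ^ 2 * u ^ 2) * c)
      = x * c * ∫ u in Ioi (0:ℝ), exp (-y ^ 2 * u ^ 2) * exp (-x ^ 2 * u ^ 2) := by
        rw [← integral_const_mul]; congr 1 with u; ring
    _ = √π / 2 * (x * c / √(x ^ 2 + y ^ 2)) := by
        rw [integral_exp_neg_mul_sq_mul_exp_neg_mul_sq_Ioi, add_comm]; ring

theorem iterated_L2_eq_glasser_general (f : ℝ → ℝ) (y : ℝ)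
    (habs : IntegrableOn
      (fun p : ℝ × ℝ => Real.exp (-y^2 * p.1^2) * (p.2 * Real.exp (-p.2^2 * p.1^2) * f p.2))
      ((Set.Ioi (0:ℝ)) ×ˢ (Set.Ioi (0:ℝ)))) :
    ∫ u in Set.Ioi (0:ℝ), Real.exp (-y^2 * u^2) *
        (∫ x in Set.Ioi (0:ℝ), x * Real.exp (-x^2 * u^2) * f x)
      = (Real.sqrt π / 2) * ∫ x in Set.Ioi (0:ℝ), x * f x / Real.sqrt (x^2 + y^2) := by
  rw [IntegrableOn, Measure.volume_eq_prod, ← Measure.prod_restrict] at habs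
  simp_rw [← integral_const_mul]
  rw [integral_integral_swap habs]
  simp_rw [integral_exp_neg_sq_mul_L2_kernel_Ioi]

/-- Lemma 1: iterated L₂-transform equals (√π/2) times the Glasser transform. -/
theorem iterated_L2_eq_glasser (f : ℝ → ℝ) (y : ℝ) (hy : 0 < y)
    (habs : IntegrableOn
      (fun p : ℝ × ℝ => Real.exp (-y^2 * p.1^2) * (p.2 * Real.exp (-p.2^2 * p.1^2) * f p.2))
      ((Set.Ioi (0:ℝ)) ×ˢ (Set.Ioi (0:ℝ))))
    (hG : IntegrableOn (fun x : ℝ => x * f x / Real.sqrt (x^2 + y^2)) (Set.Ioi (0:ℝ))) :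
    ∫ u in Set.Ioi (0:ℝ), Real.exp (-y^2 * u^2) *
        (∫ x in Set.Ioi (0:ℝ), x * Real.exp (-x^2 * u^2) * f x)
      = (Real.sqrt π / 2) * ∫ x in Set.Ioi (0:ℝ), x * f x / Real.sqrt (x^2 + y^2) :=
  iterated_L2_eq_glasser_general f y habs
end

section
/- For 0 < μ < 1 and y > 0, the Glasser transform of x^(μ-1) satisfies ∫₀^∞ x^(μ-1)/√(x²+y²) dx = 2^(-μ) B(μ, 1/2 - μ/2) y^(μ-1), where B is the Beta function. -/
/-! Scaling `x = y u` pulls out `y ^ (μ - 1)`; the substitution `u = √t` turns what remains into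
`½ ∫₀^∞ t ^ (μ/2 - 1) (1 + t) ^ (-1/2) dt`, and `t = s / (1 - s)` makes this Euler's integral
`B(μ/2, 1/2 - μ/2) / 2`. Legendre's duplication formula for `Γ(μ/2) Γ(μ/2 + 1/2)` rewrites it as
`2 ^ (-μ) B(μ, 1/2 - μ/2)`. -/

open MeasureTheory Real Set

theorem integral_Ioo_rpow_mul_one_sub_rpow_eq_beta {a b : ℝ} (ha : 0 < a) (hb : 0 < b) :
    ∫ s in Ioo (0 : ℝ) 1, s ^ (a - 1) * (1 - s) ^ (b - 1) = ProbabilityTheory.beta a b := by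
  rw [ProbabilityTheory.beta_eq_betaIntegralReal a b ha hb, Complex.betaIntegral,
    intervalIntegral.integral_of_le zero_le_one, ← integral_Ioc_eq_integral_Ioo,
    ← RCLike.re_to_complex, ← integral_re]
  · refine setIntegral_congr_fun measurableSet_Ioc fun x ⟨hx0, hx1⟩ ↦ ?_
    norm_cast
    rw [← Complex.ofReal_cpow hx0.le, ← Complex.ofReal_cpow (sub_nonneg.2 hx1),
      RCLike.re_to_complex, ← Complex.ofReal_mul, Complex.ofReal_re]
  · rw [← IntegrableOn, ← intervalIntegrable_iff_integrableOn_Ioc_of_le zero_le_one]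
    exact Complex.betaIntegral_convergent (by simpa) (by simpa)

theorem integral_Ioi_eq_integral_Ioo_div_one_sub {E : Type*} [NormedAddCommGroup E]
    [NormedSpace ℝ E] (g : ℝ → E) :
    ∫ t in Ioi (0 : ℝ), g t = ∫ s in Ioo (0 : ℝ) 1, ((1 - s) ^ 2)⁻¹ • g (s / (1 - s)) := by
  have himage : (fun s : ℝ ↦ s / (1 - s)) '' Ioo 0 1 = Ioi 0 := by
    ext t
    refine ⟨?_, fun ht ↦ ⟨t / (1 + t), ⟨?_, ?_⟩, ?_⟩⟩
    · rintro ⟨s, ⟨hs0, hs1⟩, rfl⟩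
      exact div_pos hs0 (sub_pos.2 hs1)
    all_goals have ht : 0 < t := ht
    · positivity
    · rw [div_lt_one (by positivity)]; linarith
    · field_simp; ring
  have hderiv : ∀ s ∈ Ioo (0 : ℝ) 1,
      HasDerivWithinAt (fun s ↦ s / (1 - s)) ((1 - s) ^ 2)⁻¹ (Ioo 0 1) s := by
    rintro s ⟨-, hs1⟩
    have h := (hasDerivAt_id' s).div ((hasDerivAt_id' s).const_sub 1) (sub_pos.2 hs1).ne'
    rw [show (1 * (1 - s) - s * -1) / (1 - s) ^ 2 = ((1 - s) ^ 2)⁻¹ by ring] at h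
    exact h.hasDerivWithinAt
  have hinj : InjOn (fun s : ℝ ↦ s / (1 - s)) (Ioo 0 1) := by
    rintro s ⟨-, hs1⟩ s' ⟨-, hs1'⟩ h
    rw [div_eq_div_iff (sub_pos.2 hs1).ne' (sub_pos.2 hs1').ne'] at h
    linarith
  rw [← himage, integral_image_eq_integral_abs_deriv_smul measurableSet_Ioo hderiv hinj]
  refine setIntegral_congr_fun measurableSet_Ioo fun s _ ↦ ?_
  rw [abs_of_nonneg (by positivity)]

theorem integral_Ioi_rpow_mul_one_add_rpow_neg_eq_integral_Ioo (a b : ℝ) :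
    ∫ t in Ioi (0 : ℝ), t ^ (a - 1) * (1 + t) ^ (-(a + b))
      = ∫ s in Ioo (0 : ℝ) 1, s ^ (a - 1) * (1 - s) ^ (b - 1) := by
  rw [integral_Ioi_eq_integral_Ioo_div_one_sub]
  refine setIntegral_congr_fun measurableSet_Ioo fun s ⟨hs0, hs1⟩ ↦ ?_
  have h1s : 0 < 1 - s := sub_pos.2 hs1
  have hsum : 1 + s / (1 - s) = (1 - s)⁻¹ := by field_simp; ring
  rw [smul_eq_mul, hsum, div_rpow hs0.le h1s.le, inv_rpow h1s.le, ← rpow_neg h1s.le, neg_neg,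
    div_eq_mul_inv, ← rpow_neg h1s.le, ← rpow_natCast, ← rpow_neg h1s.le]
  calc _ = s ^ (a - 1) *
        ((1 - s) ^ (-((2 : ℕ) : ℝ)) * (1 - s) ^ (-(a - 1)) * (1 - s) ^ (a + b)) := by ring
    _ = _ := by rw [← rpow_add h1s, ← rpow_add h1s]; congr 2; push_cast; ring

theorem integral_Ioi_rpow_smul_comp_div {E : Type*} [NormedAddCommGroup E] [NormedSpace ℝ E]
    (g : ℝ → E) (s : ℝ) {y : ℝ} (hy : 0 < y) :
    ∫ x in Ioi (0 : ℝ), x ^ (s - 1) • g (x / y)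
      = y ^ s • ∫ x in Ioi (0 : ℝ), x ^ (s - 1) • g x := by
  have hscale := integral_comp_mul_left_Ioi' (fun x ↦ x ^ (s - 1) • g (x / y)) 0 hy
  rw [mul_zero] at hscale
  rw [← hscale, ← integral_smul, ← integral_smul]
  refine setIntegral_congr_fun measurableSet_Ioi fun x (hx : 0 < x) ↦ ?_
  rw [mul_div_cancel_left₀ _ hy.ne', smul_smul, smul_smul, mul_rpow hy.le hx.le,
    rpow_sub_one hy.ne']
  field_simp

theorem integral_Ioi_rpow_smul_comp_rpow {E : Type*} [NormedAddCommGroup E] [NormedSpace ℝ E]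
    (g : ℝ → E) (s : ℝ) {p : ℝ} (hp : 0 < p) :
    ∫ x in Ioi (0 : ℝ), x ^ (s - 1) • g (x ^ p)
      = p⁻¹ • ∫ t in Ioi (0 : ℝ), t ^ (s / p - 1) • g t := by
  rw [← integral_comp_rpow_Ioi_of_pos (g := fun t ↦ t ^ (s / p - 1) • g t) hp, ← integral_smul]
  refine setIntegral_congr_fun measurableSet_Ioi fun x (hx : 0 < x) ↦ ?_
  rw [smul_smul, smul_smul, ← rpow_mul hx.le, mul_sub, mul_div_cancel₀ _ hp.ne', mul_one]
  congr 1
  rw [inv_mul_cancel_left₀ hp.ne', ← rpow_add hx]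
  ring_nf

theorem integral_Ioi_rpow_div_sqrt_sq_add_sq (s : ℝ) {y : ℝ} (hy : 0 < y) :
    ∫ x in Ioi (0 : ℝ), x ^ (s - 1) / √(x ^ 2 + y ^ 2)
      = y ^ (s - 1) * ∫ x in Ioi (0 : ℝ), x ^ (s - 1) * (1 + x ^ 2) ^ (-(1 / 2) : ℝ) := by
  have hintegrand : ∀ x : ℝ, x ^ (s - 1) / √(x ^ 2 + y ^ 2)
      = y⁻¹ * (x ^ (s - 1) * (1 + (x / y) ^ 2) ^ (-(1 / 2) : ℝ)) := by
    intro x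
    rw [show x ^ 2 + y ^ 2 = y ^ 2 * (1 + (x / y) ^ 2) by field_simp; ring,
      sqrt_mul (sq_nonneg y), sqrt_sq hy.le, sqrt_eq_rpow, rpow_neg (by positivity)]
    field_simp
  have hscale := integral_Ioi_rpow_smul_comp_div (fun t ↦ (1 + t ^ 2) ^ (-(1 / 2) : ℝ)) s hy
  simp only [smul_eq_mul] at hscale
  rw [funext hintegrand, integral_const_mul, hscale, ← mul_assoc, ← rpow_neg_one,
    ← rpow_add hy, neg_add_eq_sub]

theorem beta_half_div_two_eq_two_rpow_neg_mul_beta (s : ℝ) (hs : 0 < s) :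
    ProbabilityTheory.beta (s / 2) (1 / 2 - s / 2) / 2
      = 2 ^ (-s) * ProbabilityTheory.beta s (1 / 2 - s / 2) := by
  have hduplication := Gamma_mul_Gamma_add_half (s / 2)
  rw [mul_div_cancel₀ s two_ne_zero, sub_eq_add_neg, rpow_add two_pos, rpow_one] at hduplication
  have hΓ : Gamma (s / 2 + 1 / 2) ≠ 0 := (Gamma_pos_of_pos (by positivity)).ne'
  simp only [ProbabilityTheory.beta]
  rw [add_sub_cancel, Gamma_one_half_eq, show s + (1 / 2 - s / 2) = s / 2 + 1 / 2 by ring]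
  -- as atoms, so that `field_simp` does not normalise the arguments of `Gamma` apart
  set c := Gamma (1 / 2 - s / 2)
  set d := Gamma (s / 2 + 1 / 2)
  field_simp
  linear_combination c * hduplication

/-- Glasser transform of x^(μ-1): ∫₀^∞ x^(μ-1)/√(x²+y²) dx = 2^(-μ) B(μ, 1/2-μ/2) y^(μ-1). -/
theorem glasser_of_power (μ y : ℝ) (hμ0 : 0 < μ) (hμ1 : μ < 1) (hy : 0 < y) :
    ∫ x in Set.Ioi (0:ℝ), x ^ (μ - 1) / Real.sqrt (x^2 + y^2)
      = (2:ℝ) ^ (-μ) *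
        (Real.Gamma μ * Real.Gamma (1/2 - μ/2) / Real.Gamma (μ + (1/2 - μ/2))) *
        y ^ (μ - 1) := by
  have hsub := integral_Ioi_rpow_smul_comp_rpow
    (fun t ↦ (1 + t) ^ (-(μ / 2 + (1 / 2 - μ / 2)))) μ two_pos
  simp only [rpow_two, smul_eq_mul] at hsub
  rw [integral_Ioi_rpow_div_sqrt_sq_add_sq μ hy,
    show (-(1 / 2) : ℝ) = -(μ / 2 + (1 / 2 - μ / 2)) by ring, hsub,
    integral_Ioi_rpow_mul_one_add_rpow_neg_eq_integral_Ioo,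
    integral_Ioo_rpow_mul_one_sub_rpow_eq_beta (by positivity) (by linarith), inv_mul_eq_div,
    beta_half_div_two_eq_two_rpow_neg_mul_beta μ hμ0, ProbabilityTheory.beta]
  ring
end

section
/- If f and g are measurable functions on (0,∞) for which all integrals converge absolutely, then ∫₀^∞ L₂{f;y} · L₂{g;y} dy = (√π/2) ∫₀^∞ x f(x) · G{u g(u); x} dx, where L₂{f;y} = ∫₀^∞ x exp(-x²y²) f(x) dx and G{h;x} = ∫₀^∞ h(u)/√(u²+x²) du. -/
open MeasureTheory Real Set

/-! The Gaussian kernel factorises, `exp (-x²y²) exp (-u²y²) = exp (-(u² + x²) y²)`, and its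
`y`-integral over `(0, ∞)` is `(√π / 2) / √(u² + x²)`. Writing the left-hand side as a triple
integral over `x, u, y` and integrating first in `y` therefore produces the Glasser kernel; the
three changes of the order of integration are licensed by Fubini's theorem. -/

noncomputable def L2Transform (f : ℝ → ℝ) (y : ℝ) : ℝ :=
  ∫ x in Ioi (0:ℝ), x * exp (-x^2 * y^2) * f x

noncomputable def glasserTransform (h : ℝ → ℝ) (x : ℝ) : ℝ :=
  ∫ u in Ioi (0:ℝ), h u / √(u^2 + x^2)

theorem setIntegral_integral_swap {α β E : Type*} [MeasurableSpace α] [MeasurableSpace β]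
    [NormedAddCommGroup E] [NormedSpace ℝ E] {μ : Measure α} {ν : Measure β}
    [SFinite μ] [SFinite ν] {s : Set α} {t : Set β} {F : α × β → E}
    (hF : IntegrableOn F (s ×ˢ t) (μ.prod ν)) :
    ∫ a in s, ∫ b in t, F (a, b) ∂ν ∂μ = ∫ b in t, ∫ a in s, F (a, b) ∂μ ∂ν := by
  rw [IntegrableOn, ← Measure.prod_restrict] at hF
  exact integral_integral_swap hF

theorem integral_exp_mul_exp_Ioi {x : ℝ} (hx : 0 < x) (u : ℝ) :
    ∫ y in Ioi (0:ℝ), exp (-x^2 * y^2) * exp (-u^2 * y^2) = √π / 2 / √(u^2 + x^2) := by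
  have hux : 0 ≤ u^2 + x^2 := by positivity
  simp_rw [← exp_add, show ∀ y : ℝ, -x^2 * y^2 + -u^2 * y^2 = -(u^2 + x^2) * y^2 from
    fun y => by ring]
  rw [integral_gaussian_Ioi, sqrt_div' π hux]
  ring

theorem integrableOn_L2Transform_integrand_mul_gaussian {f : ℝ → ℝ}
    (hf : IntegrableOn (fun p : ℝ × ℝ => p.2 * exp (-p.2^2 * p.1^2) * f p.2)
      (Ioi (0:ℝ) ×ˢ Ioi (0:ℝ))) (u : ℝ) :
    IntegrableOn (fun p : ℝ × ℝ => p.2 * exp (-p.2^2 * p.1^2) * f p.2 * exp (-u^2 * p.1^2))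
      (Ioi (0:ℝ) ×ˢ Ioi (0:ℝ)) := by
  refine hf.mul_bdd (by fun_prop) (c := 1) (Filter.Eventually.of_forall fun p => ?_)
  rw [norm_of_nonneg (exp_nonneg _), exp_le_one_iff]
  nlinarith [sq_nonneg u, sq_nonneg p.1, mul_nonneg (sq_nonneg u) (sq_nonneg p.1)]

theorem integral_L2Transform_mul_gaussian {f : ℝ → ℝ}
    (hf : IntegrableOn (fun p : ℝ × ℝ => p.2 * exp (-p.2^2 * p.1^2) * f p.2)
      (Ioi (0:ℝ) ×ˢ Ioi (0:ℝ))) (u : ℝ) :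
    ∫ y in Ioi (0:ℝ), L2Transform f y * exp (-u^2 * y^2)
      = √π / 2 * ∫ x in Ioi (0:ℝ), x * f x / √(u^2 + x^2) := by
  calc ∫ y in Ioi (0:ℝ), L2Transform f y * exp (-u^2 * y^2)
      = ∫ y in Ioi (0:ℝ), ∫ x in Ioi (0:ℝ), x * exp (-x^2 * y^2) * f x * exp (-u^2 * y^2) := by
        simp_rw [L2Transform, integral_mul_const]
    _ = ∫ x in Ioi (0:ℝ), ∫ y in Ioi (0:ℝ), x * exp (-x^2 * y^2) * f x * exp (-u^2 * y^2) :=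
        setIntegral_integral_swap (integrableOn_L2Transform_integrand_mul_gaussian hf u)
    _ = ∫ x in Ioi (0:ℝ), √π / 2 * (x * f x / √(u^2 + x^2)) := by
        refine setIntegral_congr_fun measurableSet_Ioi fun x hx => ?_
        simp_rw [show ∀ y : ℝ, x * exp (-x^2 * y^2) * f x * exp (-u^2 * y^2)
            = x * f x * (exp (-x^2 * y^2) * exp (-u^2 * y^2)) from fun y => by ring]
        rw [integral_const_mul, integral_exp_mul_exp_Ioi hx]
        ring
    _ = √π / 2 * ∫ x in Ioi (0:ℝ), x * f x / √(u^2 + x^2) := integral_const_mul _ _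

theorem integral_L2Transform_mul_L2Transform {f g : ℝ → ℝ}
    (hf : IntegrableOn (fun p : ℝ × ℝ => p.2 * exp (-p.2^2 * p.1^2) * f p.2)
      (Ioi (0:ℝ) ×ˢ Ioi (0:ℝ)))
    (hfg : IntegrableOn (fun p : ℝ × ℝ => L2Transform f p.1 * (p.2 * exp (-p.2^2 * p.1^2) * g p.2))
      (Ioi (0:ℝ) ×ˢ Ioi (0:ℝ)))
    (hG : IntegrableOn (fun p : ℝ × ℝ => p.1 * f p.1 * (p.2 * g p.2) / √(p.2^2 + p.1^2))
      (Ioi (0:ℝ) ×ˢ Ioi (0:ℝ))) :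
    ∫ y in Ioi (0:ℝ), L2Transform f y * L2Transform g y
      = √π / 2 * ∫ x in Ioi (0:ℝ), x * f x * glasserTransform (fun u => u * g u) x := by
  calc ∫ y in Ioi (0:ℝ), L2Transform f y * L2Transform g y
      = ∫ y in Ioi (0:ℝ), ∫ u in Ioi (0:ℝ), L2Transform f y * (u * exp (-u^2 * y^2) * g u) := by
        simp_rw [L2Transform, integral_const_mul]
    _ = ∫ u in Ioi (0:ℝ), ∫ y in Ioi (0:ℝ), L2Transform f y * (u * exp (-u^2 * y^2) * g u) :=
        setIntegral_integral_swap hfg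
    _ = ∫ u in Ioi (0:ℝ), √π / 2 * ∫ x in Ioi (0:ℝ), x * f x * (u * g u) / √(u^2 + x^2) := by
        refine integral_congr_ae (Filter.Eventually.of_forall fun u => ?_)
        simp_rw [show ∀ y, L2Transform f y * (u * exp (-u^2 * y^2) * g u)
            = u * g u * (L2Transform f y * exp (-u^2 * y^2)) from fun y => by ring,
          show ∀ x, x * f x * (u * g u) / √(u^2 + x^2) = u * g u * (x * f x / √(u^2 + x^2))
            from fun x => by ring]
        rw [integral_const_mul, integral_L2Transform_mul_gaussian hf, integral_const_mul]
        ring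
    _ = √π / 2 * ∫ x in Ioi (0:ℝ), ∫ u in Ioi (0:ℝ), x * f x * (u * g u) / √(u^2 + x^2) := by
        rw [integral_const_mul, setIntegral_integral_swap hG]
    _ = √π / 2 * ∫ x in Ioi (0:ℝ), x * f x * glasserTransform (fun u => u * g u) x := by
        simp_rw [glasserTransform, ← integral_const_mul, mul_div_assoc]

theorem parseval_goldstein_L2_glasser_general (f g : ℝ → ℝ)
    (h1 : IntegrableOn
      (fun p : ℝ × ℝ => p.2 * Real.exp (-p.2^2 * p.1^2) * f p.2)
      ((Set.Ioi (0:ℝ)) ×ˢ (Set.Ioi (0:ℝ))))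
    (h3 : IntegrableOn
      (fun p : ℝ × ℝ =>
        (∫ x in Set.Ioi (0:ℝ), x * Real.exp (-x^2 * p.1^2) * f x) *
          (p.2 * Real.exp (-p.2^2 * p.1^2) * g p.2))
      ((Set.Ioi (0:ℝ)) ×ˢ (Set.Ioi (0:ℝ))))
    (h4 : IntegrableOn
      (fun p : ℝ × ℝ => p.1 * f p.1 * (p.2 * g p.2) / Real.sqrt (p.2^2 + p.1^2))
      ((Set.Ioi (0:ℝ)) ×ˢ (Set.Ioi (0:ℝ)))) :
    ∫ y in Set.Ioi (0:ℝ),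
        (∫ x in Set.Ioi (0:ℝ), x * Real.exp (-x^2 * y^2) * f x) *
          (∫ u in Set.Ioi (0:ℝ), u * Real.exp (-u^2 * y^2) * g u)
      = (Real.sqrt π / 2) *
        ∫ x in Set.Ioi (0:ℝ),
          x * f x * (∫ u in Set.Ioi (0:ℝ), u * g u / Real.sqrt (u^2 + x^2)) :=
  integral_L2Transform_mul_L2Transform h1 h3 h4

/-- Theorem 1, identity (2.12): Parseval–Goldstein relation between the L₂-transform
and the Glasser transform. -/
theorem parseval_goldstein_L2_glasser (f g : ℝ → ℝ)
    (h1 : IntegrableOn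
      (fun p : ℝ × ℝ => p.2 * Real.exp (-p.2^2 * p.1^2) * f p.2)
      ((Set.Ioi (0:ℝ)) ×ˢ (Set.Ioi (0:ℝ))))
    (h2 : IntegrableOn
      (fun p : ℝ × ℝ => p.2 * Real.exp (-p.2^2 * p.1^2) * g p.2)
      ((Set.Ioi (0:ℝ)) ×ˢ (Set.Ioi (0:ℝ))))
    (h3 : IntegrableOn
      (fun p : ℝ × ℝ =>
        (∫ x in Set.Ioi (0:ℝ), x * Real.exp (-x^2 * p.1^2) * f x) *
          (p.2 * Real.exp (-p.2^2 * p.1^2) * g p.2))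
      ((Set.Ioi (0:ℝ)) ×ˢ (Set.Ioi (0:ℝ))))
    (h4 : IntegrableOn
      (fun p : ℝ × ℝ => p.1 * f p.1 * (p.2 * g p.2) / Real.sqrt (p.2^2 + p.1^2))
      ((Set.Ioi (0:ℝ)) ×ˢ (Set.Ioi (0:ℝ)))) :
    ∫ y in Set.Ioi (0:ℝ),
        (∫ x in Set.Ioi (0:ℝ), x * Real.exp (-x^2 * y^2) * f x) *
          (∫ u in Set.Ioi (0:ℝ), u * Real.exp (-u^2 * y^2) * g u)
      = (Real.sqrt π / 2) *
        ∫ x in Set.Ioi (0:ℝ),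
          x * f x * (∫ u in Set.Ioi (0:ℝ), u * g u / Real.sqrt (u^2 + x^2)) :=
  parseval_goldstein_L2_glasser_general f g h1 h3 h4
end

section
/- Let 0 < μ < 1 and let f be such that all integrals converge absolutely. Then ∫₀^∞ u^(μ-1) (∫₀^∞ x f(x)/√(x²+u²) dx) du = (1/2) B(μ/2, 1/2 - μ/2) ∫₀^∞ x^μ f(x) dx. -/
/-!
By Fubini the left side is `∫₀^∞ x f(x) (∫₀^∞ u^(μ-1) / √(x² + u²) du) dx`. Scaling `u = x t`
turns the inner integral into `x^(μ-1) ∫₀^∞ t^(μ-1) / √(1 + t²) dt`; the substitution `t = √s`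
makes this half the Beta integral of the second kind `∫₀^∞ s^(a-1) (1 + s)^(-(a+b)) ds` with
`a = μ/2`, `b = 1/2 - μ/2`, and `s ↦ s / (1 + s)` maps that onto the Beta integral over `(0, 1)`.
-/

open MeasureTheory Real Set

theorem integral_rpow_mul_one_sub_rpow_Ioo {a b : ℝ} (ha : 0 < a) (hb : 0 < b) :
    ∫ x in Ioo (0:ℝ) 1, x ^ (a - 1) * (1 - x) ^ (b - 1) = ProbabilityTheory.beta a b := by
  have hofReal :
      Complex.betaIntegral a b = ↑(∫ x in (0:ℝ)..1, x ^ (a - 1) * (1 - x) ^ (b - 1)) := by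
    rw [Complex.betaIntegral, ← intervalIntegral.integral_ofReal]
    refine intervalIntegral.integral_congr fun x hx => ?_
    rw [uIcc_of_le zero_le_one] at hx
    push_cast
    rw [Complex.ofReal_cpow hx.1, Complex.ofReal_cpow (sub_nonneg.2 hx.2)]
    push_cast
    ring_nf
  rw [ProbabilityTheory.beta_eq_betaIntegralReal a b ha hb, hofReal, Complex.ofReal_re,
    intervalIntegral.integral_of_le zero_le_one, integral_Ioc_eq_integral_Ioo]

theorem integral_comp_div_one_add_Ioi {E : Type*} [NormedAddCommGroup E] [NormedSpace ℝ E]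
    (g : ℝ → E) :
    ∫ t in Ioi (0:ℝ), ((1 + t) ^ 2)⁻¹ • g (t / (1 + t)) = ∫ x in Ioo (0:ℝ) 1, g x := by
  have hderiv : ∀ t ∈ Ioi (0:ℝ),
      HasDerivWithinAt (fun t : ℝ => t / (1 + t)) ((1 + t) ^ 2)⁻¹ (Ioi 0) t := by
    intro t (ht : 0 < t)
    have h := (hasDerivAt_id t).div ((hasDerivAt_id t).const_add 1) (by simp only [id]; linarith)
    exact h.hasDerivWithinAt.congr_deriv (by simp)
  have hinj : InjOn (fun t : ℝ => t / (1 + t)) (Ioi 0) := by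
    intro s (hs : 0 < s) t (ht : 0 < t) h
    field_simp at h
    linarith
  have himage : (fun t : ℝ => t / (1 + t)) '' Ioi 0 = Ioo 0 1 := by
    ext x
    constructor
    · rintro ⟨t, ht : 0 < t, rfl⟩
      exact ⟨by positivity, (div_lt_one (by linarith)).2 (by linarith)⟩
    · rintro ⟨hx0, hx1⟩
      refine ⟨x / (1 - x), div_pos hx0 (by linarith), ?_⟩
      field_simp
      ring
  rw [← himage, integral_image_eq_integral_abs_deriv_smul measurableSet_Ioi hderiv hinj]
  refine setIntegral_congr_fun measurableSet_Ioi fun t (ht : 0 < t) => ?_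
  rw [abs_of_pos (by positivity)]

theorem integral_rpow_mul_one_add_rpow_neg_Ioi {a b : ℝ} (ha : 0 < a) (hb : 0 < b) :
    ∫ t in Ioi (0:ℝ), t ^ (a - 1) * (1 + t) ^ (-(a + b)) = ProbabilityTheory.beta a b := by
  rw [← integral_rpow_mul_one_sub_rpow_Ioo ha hb, ← integral_comp_div_one_add_Ioi]
  refine setIntegral_congr_fun measurableSet_Ioi fun t (ht : 0 < t) => ?_
  have h1t : 0 < 1 + t := by linarith
  have hcompl : 1 - t / (1 + t) = (1 + t)⁻¹ := by field_simp; ring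
  have hpow :
      (1 + t) ^ (-(a + b)) = ((1 + t) ^ 2 * (1 + t) ^ (a - 1) * (1 + t) ^ (b - 1))⁻¹ := by
    rw [← rpow_natCast, ← rpow_add h1t, ← rpow_add h1t, ← rpow_neg h1t.le]
    ring_nf
  rw [smul_eq_mul, hcompl, div_rpow ht.le h1t.le, inv_rpow h1t.le, hpow]
  field_simp

theorem integral_rpow_div_sqrt_one_add_sq_Ioi {μ : ℝ} (hμ0 : 0 < μ) (hμ1 : μ < 1) :
    ∫ t in Ioi (0:ℝ), t ^ (μ - 1) / √(1 + t ^ 2)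
      = 1 / 2 * ProbabilityTheory.beta (μ / 2) (1 / 2 - μ / 2) := by
  symm
  rw [← integral_rpow_mul_one_add_rpow_neg_Ioi (by linarith) (by linarith),
    ← integral_const_mul, ← integral_comp_rpow_Ioi_of_pos two_pos]
  refine setIntegral_congr_fun measurableSet_Ioi fun t (ht : 0 < t) => ?_
  have hsqrt : (1 + (t ^ (2:ℝ))) ^ (-(μ / 2 + (1 / 2 - μ / 2))) = (√(1 + t ^ 2))⁻¹ := by
    rw [sqrt_eq_rpow, ← rpow_neg (by positivity), rpow_two]
    ring_nf
  have hpow : t ^ ((2:ℝ) - 1) * (t ^ (2:ℝ)) ^ (μ / 2 - 1) = t ^ (μ - 1) := by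
    rw [← rpow_mul ht.le, ← rpow_add ht]
    ring_nf
  rw [smul_eq_mul, hsqrt, ← hpow]
  ring

theorem integral_rpow_div_sqrt_sq_add_sq_Ioi {x : ℝ} (hx : 0 < x) (s : ℝ) :
    ∫ u in Ioi (0:ℝ), u ^ (s - 1) / √(x ^ 2 + u ^ 2)
      = x ^ (s - 1) * ∫ t in Ioi (0:ℝ), t ^ (s - 1) / √(1 + t ^ 2) := by
  have hscale := integral_comp_mul_left_Ioi' (fun u => u ^ (s - 1) / √(x ^ 2 + u ^ 2)) 0 hx
  rw [mul_zero] at hscale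
  rw [← hscale, smul_eq_mul, ← integral_const_mul, ← integral_const_mul]
  refine setIntegral_congr_fun measurableSet_Ioi fun t (ht : 0 < t) => ?_
  have hsqrt : √(x ^ 2 + (x * t) ^ 2) = x * √(1 + t ^ 2) := by
    rw [show x ^ 2 + (x * t) ^ 2 = x ^ 2 * (1 + t ^ 2) by ring, sqrt_mul (sq_nonneg x),
      sqrt_sq hx.le]
  rw [hsqrt, mul_rpow hx.le ht.le]
  field_simp

/-- Corollary (2.20): ∫₀^∞ u^(μ-1) G{x f(x); u} du = (1/2) B(μ/2, 1/2-μ/2) ∫₀^∞ x^μ f(x) dx. -/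
theorem moment_of_glasser (f : ℝ → ℝ) (μ : ℝ) (hμ0 : 0 < μ) (hμ1 : μ < 1)
    (habs : IntegrableOn
      (fun p : ℝ × ℝ => p.1 ^ (μ - 1) * (p.2 * f p.2 / Real.sqrt (p.2^2 + p.1^2)))
      ((Set.Ioi (0:ℝ)) ×ˢ (Set.Ioi (0:ℝ)))) :
    ∫ u in Set.Ioi (0:ℝ),
        u ^ (μ - 1) * (∫ x in Set.Ioi (0:ℝ), x * f x / Real.sqrt (x^2 + u^2))
      = (1/2) *
        (Real.Gamma (μ/2) * Real.Gamma (1/2 - μ/2) / Real.Gamma (μ/2 + (1/2 - μ/2))) *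
        ∫ x in Set.Ioi (0:ℝ), x ^ μ * f x := by
  have hprod :
      Integrable (Function.uncurry fun u x => u ^ (μ - 1) * (x * f x / √(x ^ 2 + u ^ 2)))
      ((volume.restrict (Ioi 0)).prod (volume.restrict (Ioi 0))) := by
    rw [Measure.prod_restrict, ← Measure.volume_eq_prod]
    exact habs
  calc _ = ∫ u in Ioi 0, ∫ x in Ioi 0, u ^ (μ - 1) * (x * f x / √(x ^ 2 + u ^ 2)) := by
        simp_rw [integral_const_mul]
    _ = ∫ x in Ioi 0, ∫ u in Ioi 0, u ^ (μ - 1) * (x * f x / √(x ^ 2 + u ^ 2)) :=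
        integral_integral_swap hprod
    _ = ∫ x in Ioi 0,
          1 / 2 * ProbabilityTheory.beta (μ / 2) (1 / 2 - μ / 2) * (x ^ μ * f x) := by
        refine setIntegral_congr_fun measurableSet_Ioi fun x (hx : 0 < x) => ?_
        simp_rw [mul_div_left_comm _ (x * f x), integral_const_mul,
          integral_rpow_div_sqrt_sq_add_sq_Ioi hx, integral_rpow_div_sqrt_one_add_sq_Ioi hμ0 hμ1,
          rpow_sub_one hx.ne']
        field_simp
    -- `ProbabilityTheory.beta a b` is by definition `Γ a * Γ b / Γ (a + b)`.
    _ = _ := integral_const_mul _ _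
end

section
/- For 0 < y < z, ∫₀^∞ (x/(x²+z²)) / √(x²+y²) dx = (π - 2 arcsin(y/z)) / (2√(z²-y²)). -/
open MeasureTheory Real Set Filter

/-- Glasser transform evaluation: G{x/(x²+z²); y} = (π − 2 arcsin(y/z))/(2√(z²−y²))
for 0 < y < z. -/
theorem glasser_of_rational (y z : ℝ) (hy : 0 < y) (hyz : y < z) :
    ∫ x in Set.Ioi (0:ℝ), (x / (x^2 + z^2)) / Real.sqrt (x^2 + y^2)
      = (π - 2 * Real.arcsin (y / z)) / (2 * Real.sqrt (z^2 - y^2)) := by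
  have hz : 0 < z := hy.trans hyz
  have hzy : 0 < z^2 - y^2 := by nlinarith
  set a : ℝ := Real.sqrt (z^2 - y^2) with ha_def
  have ha : 0 < a := Real.sqrt_pos.mpr hzy
  have ha2 : a^2 = z^2 - y^2 := Real.sq_sqrt hzy.le
  set f : ℝ → ℝ := fun x => (1/a) * Real.arctan (Real.sqrt (x^2 + y^2) / a) with hf_def
  -- derivative of f
  have hderiv : ∀ x : ℝ, HasDerivAt f ((x / (x^2 + z^2)) / Real.sqrt (x^2 + y^2)) x := by
    intro x
    have hxy : (0:ℝ) < x^2 + y^2 := by positivity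
    have hs : 0 < Real.sqrt (x^2 + y^2) := Real.sqrt_pos.mpr hxy
    have hs2 : (Real.sqrt (x^2 + y^2))^2 = x^2 + y^2 := Real.sq_sqrt hxy.le
    have h1 : HasDerivAt (fun x : ℝ => x^2 + y^2) (2 * x) x := by
      simpa using (hasDerivAt_pow 2 x).add_const (y^2)
    have h2 : HasDerivAt (fun x : ℝ => Real.sqrt (x^2 + y^2))
        (1 / (2 * Real.sqrt (x^2 + y^2)) * (2 * x)) x :=
      (Real.hasDerivAt_sqrt hxy.ne').comp x h1
    have h3 := (h2.div_const a)
    have h4 := (Real.hasDerivAt_arctan (Real.sqrt (x^2 + y^2) / a)).comp x h3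
    have h5 := h4.const_mul (1/a)
    refine h5.congr_deriv (Eq.symm ?_)
    have hxz : (0:ℝ) < x^2 + z^2 := by positivity
    field_simp
    linear_combination x * ha2 + x * hs2
  have hcont : ContinuousWithinAt f (Set.Ici 0) 0 :=
    ((hderiv 0).continuousAt).continuousWithinAt
  -- limit at infinity
  have hlim : Tendsto f atTop (nhds ((1/a) * (π/2))) := by
    have h1 : Tendsto (fun x : ℝ => Real.sqrt (x^2 + y^2) / a) atTop atTop := by
      apply tendsto_atTop_mono (f := fun x : ℝ => x / a)
      · intro x
        gcongr
        calc x ≤ |x| := le_abs_self x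
        _ = Real.sqrt (x^2) := (Real.sqrt_sq_eq_abs x).symm
        _ ≤ Real.sqrt (x^2 + y^2) := Real.sqrt_le_sqrt (by nlinarith)
      · exact tendsto_id.atTop_div_const ha
    have h2 := (Real.tendsto_arctan_atTop.mono_right nhdsWithin_le_nhds).comp h1
    exact h2.const_mul (1/a)
  have key := MeasureTheory.integral_Ioi_of_hasDerivAt_of_nonneg hcont
    (fun x hx => hderiv x)
    (fun x hx => by
      have hx0 : (0:ℝ) < x := hx
      have hxz : (0:ℝ) < x^2 + z^2 := by positivity
      positivity) hlim
  rw [key]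
  -- now compute f 0 and simplify
  have hf0 : f 0 = (1/a) * Real.arctan (y / a) := by
    simp [hf_def, Real.sqrt_sq hy.le]
  have harcsin : Real.arcsin (y / z) = Real.arctan (y / a) := by
    have hmem : y / z ∈ Set.Ioo (-1 : ℝ) 1 := by
      constructor
      · have : 0 < y / z := by positivity
        linarith
      · rw [div_lt_one hz]; exact hyz
    rw [Real.arcsin_eq_arctan hmem]
    congr 1
    have : 1 - (y/z)^2 = (a/z)^2 := by
      rw [div_pow, div_pow, ha2]
      field_simp
    rw [this, Real.sqrt_sq (by positivity)]
    field_simp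
  rw [hf0, harcsin]
  field_simp
end

section
/- Suppose z > 0, ν real, and max{0, −2ν} < μ < 1. Then ∫₀^∞ y^(−μ−1) exp(−z²/(2y²)) I_ν(z²/(2y²)) dy = Γ(1/2 − μ/2) Γ(ν + μ/2) / (2√π · z^μ · Γ(ν − μ/2 + 1)). -/
/-!
Substituting `t = z² / (2 y²)` turns the integral into `(z²/2)^(-s) / 2` times the Mellin
transform `∫₀^∞ t^(s-1) e^(-t) I_ν(t) dt` at `s = μ/2`. Integrating the power series of `I_ν`
term by term (all terms are nonnegative) gives `∑ₖ Γ(ν+s+2k) / (2^(2k+ν) k! Γ(k+ν+1))`,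
which by Legendre's duplication formula is a multiple of `₂F₁((ν+s)/2, (ν+s+1)/2; ν+1; 1)`.
Gauss's summation theorem evaluates it; that theorem in turn comes from expanding `(1-x)^(-a)`
under a Beta integral, the binomial series itself being the Gamma integral of
`t^(a-1) e^(-(1-x)t)`.
-/

open MeasureTheory Real Set
/-- Bessel function of the first kind of order ν (series definition). -/
noncomputable def besselJ (ν x : ℝ) : ℝ :=
  ∑' k : ℕ, (-1)^k / ((k.factorial : ℝ) * Real.Gamma ((k : ℝ) + ν + 1)) *
    (x / 2) ^ (2 * (k : ℝ) + ν)

/-- Modified Bessel function of the first kind of order ν (series definition). -/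
noncomputable def besselI (ν x : ℝ) : ℝ :=
  ∑' k : ℕ, 1 / ((k.factorial : ℝ) * Real.Gamma ((k : ℝ) + ν + 1)) *
    (x / 2) ^ (2 * (k : ℝ) + ν)

/-- Modified Bessel function of the second kind (Macdonald function) of order ν,
via its integral representation, valid for x > 0. -/
noncomputable def besselK (ν x : ℝ) : ℝ :=
  ∫ t in Set.Ioi (0:ℝ), Real.exp (-x * Real.cosh t) * Real.cosh (ν * t)

/-- Modified Struve function of order 0 (series definition). -/
noncomputable def struveL0 (x : ℝ) : ℝ :=
  ∑' k : ℕ, (x / 2) ^ (2 * (k : ℝ) + 1) / (Real.Gamma ((k : ℝ) + 3/2))^2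

theorem hasSum_integral_of_nonneg_of_hasSum {α ι : Type*} [MeasurableSpace α] [Countable ι]
    {μ : Measure α} {F : ι → α → ℝ} {f : α → ℝ}
    (hF_meas : ∀ n, AEStronglyMeasurable (F n) μ) (hF_nonneg : ∀ n, 0 ≤ᵐ[μ] F n)
    (hf : Integrable f μ) (h_lim : ∀ᵐ a ∂μ, HasSum (fun n => F n a) (f a)) :
    HasSum (fun n => ∫ a, F n a ∂μ) (∫ a, f a ∂μ) :=
  hasSum_integral_of_dominated_convergence F hF_meas
    (fun n => (hF_nonneg n).mono fun _ h => (Real.norm_of_nonneg h).le)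
    (h_lim.mono fun _ h => h.summable)
    (hf.congr (h_lim.mono fun _ h => h.tsum_eq.symm)) h_lim

theorem integral_tsum_of_nonneg_of_hasSum {α ι : Type*} [MeasurableSpace α] [Countable ι]
    {μ : Measure α} {F : ι → α → ℝ} {S : ℝ}
    (hF_int : ∀ n, Integrable (F n) μ) (hF_nonneg : ∀ n, 0 ≤ᵐ[μ] F n)
    (hS : HasSum (fun n => ∫ a, F n a ∂μ) S) :
    ∫ a, ∑' n, F n a ∂μ = S := by
  have h_norm : ∀ n, ∫ a, ‖F n a‖ ∂μ = ∫ a, F n a ∂μ := fun n =>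
    integral_congr_ae ((hF_nonneg n).mono fun _ h => Real.norm_of_nonneg h)
  rw [← integral_tsum_of_summable_integral_norm hF_int (by simpa only [h_norm] using hS.summable),
    hS.tsum_eq]

theorem integrableOn_rpow_mul_exp_neg_mul {a r : ℝ} (ha : 0 < a) (hr : 0 < r) :
    IntegrableOn (fun t : ℝ => t ^ (a - 1) * exp (-(r * t))) (Ioi 0) := by
  simpa [neg_mul] using
    integrableOn_rpow_mul_exp_neg_mul_rpow (s := a - 1) (p := 1) (by linarith) one_pos hr

theorem hasSum_Gamma_add_mul_pow_div_factorial {a x : ℝ} (ha : 0 < a) (hx0 : 0 ≤ x)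
    (hx1 : x < 1) :
    HasSum (fun k : ℕ => Gamma (a + k) * x ^ k / k.factorial) (Gamma a * (1 - x) ^ (-a)) := by
  have h1x : 0 < 1 - x := by linarith
  set F : ℕ → ℝ → ℝ := fun k t => t ^ (a - 1) * exp (-t) * ((x * t) ^ k / k.factorial)
  have hF : ∀ k, ∀ t ∈ Ioi (0:ℝ),
      F k t = x ^ k / k.factorial * (exp (-t) * t ^ (a + k - 1)) := by
    intro k t ht
    simp only [F]
    rw [show a + k - 1 = (a - 1) + k by ring, rpow_add ht, rpow_natCast, mul_pow]
    ring
  have hsum := hasSum_integral_of_nonneg_of_hasSum (μ := volume.restrict (Ioi 0)) (F := F)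
    (f := fun t => t ^ (a - 1) * exp (-((1 - x) * t)))
    (fun k => by fun_prop)
    (fun k => (ae_restrict_iff' measurableSet_Ioi).2 (ae_of_all _ fun t ht => by
      have : 0 < t := ht
      rw [hF k t ht]; positivity))
    (integrableOn_rpow_mul_exp_neg_mul ha h1x)
    ((ae_restrict_iff' measurableSet_Ioi).2 (ae_of_all _ fun t ht => by
      have h := (NormedSpace.expSeries_div_hasSum_exp (x * t)).mul_left (t ^ (a - 1) * exp (-t))
      rw [← Real.exp_eq_exp_ℝ, mul_assoc, ← exp_add] at h
      rwa [show -((1 - x) * t) = -t + x * t by ring]))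
  convert hsum using 1
  · funext k
    rw [setIntegral_congr_fun measurableSet_Ioi (hF k), integral_const_mul,
      ← Gamma_eq_integral (by positivity)]
    ring
  · rw [integral_rpow_mul_exp_neg_mul_Ioi ha h1x, one_div, inv_rpow h1x.le, rpow_neg h1x.le]
    ring

theorem ofReal_rpow_mul_one_sub_rpow {a b x : ℝ} (hx : x ∈ Icc (0:ℝ) 1) :
    ((x ^ (a - 1) * (1 - x) ^ (b - 1) : ℝ) : ℂ)
      = (x : ℂ) ^ ((a : ℂ) - 1) * (1 - (x : ℂ)) ^ ((b : ℂ) - 1) := by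
  rw [Complex.ofReal_mul, Complex.ofReal_cpow hx.1, Complex.ofReal_cpow (by linarith [hx.2])]
  push_cast
  rfl

theorem integrableOn_rpow_mul_one_sub_rpow {a b : ℝ} (ha : 0 < a) (hb : 0 < b) :
    IntegrableOn (fun x : ℝ => x ^ (a - 1) * (1 - x) ^ (b - 1)) (Ioo 0 1) := by
  have h := (intervalIntegrable_iff_integrableOn_Ioo_of_le zero_le_one).1
    (Complex.betaIntegral_convergent (u := a) (v := b) (by simpa) (by simpa))
  refine IntegrableOn.congr_fun h.re (fun x hx => ?_) measurableSet_Ioo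
  rw [← ofReal_rpow_mul_one_sub_rpow (Ioo_subset_Icc_self hx)]
  rfl

theorem integral_rpow_mul_one_sub_rpow {a b : ℝ} (ha : 0 < a) (hb : 0 < b) :
    ∫ x in Ioo (0:ℝ) 1, x ^ (a - 1) * (1 - x) ^ (b - 1)
      = Gamma a * Gamma b / Gamma (a + b) := by
  apply Complex.ofReal_injective
  rw [← integral_complex_ofReal, ← integral_Ioc_eq_integral_Ioo,
    setIntegral_congr_fun measurableSet_Ioc
      (fun x hx => ofReal_rpow_mul_one_sub_rpow (Ioc_subset_Icc_self hx)),
    ← intervalIntegral.integral_of_le zero_le_one]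
  rw [← Complex.betaIntegral, Complex.betaIntegral_eq_Gamma_mul_div _ _ (by simpa) (by simpa)]
  push_cast
  rw [Complex.Gamma_ofReal, Complex.Gamma_ofReal, ← Complex.ofReal_add, Complex.Gamma_ofReal]

theorem hasSum_Gamma_mul_Gamma_div_factorial_mul_Gamma {a b c : ℝ} (ha : 0 < a) (hb : 0 < b)
    (hc : a + b < c) :
    HasSum (fun k : ℕ => Gamma (a + k) * Gamma (b + k) / (k.factorial * Gamma (c + k)))
      (Gamma a * Gamma b * Gamma (c - a - b) / (Gamma (c - a) * Gamma (c - b))) := by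
  have hcb : 0 < c - b := by linarith
  have hcab : 0 < c - a - b := by linarith
  have hsum := hasSum_integral_of_nonneg_of_hasSum (μ := volume.restrict (Ioo 0 1))
    (F := fun (k : ℕ) (x : ℝ) =>
      Gamma (a + k) * x ^ k / k.factorial * (x ^ (b - 1) * (1 - x) ^ (c - b - 1)))
    (f := fun x => Gamma a * (1 - x) ^ (-a) * (x ^ (b - 1) * (1 - x) ^ (c - b - 1)))
    (fun k => by fun_prop)
    (fun k => (ae_restrict_iff' measurableSet_Ioo).2 (ae_of_all _ fun x hx => by
      have : 0 < Gamma (a + k) := Gamma_pos_of_pos (by positivity)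
      have : 0 < 1 - x := by linarith [hx.2]
      have : 0 < x := hx.1
      positivity))
    (by
      refine IntegrableOn.congr_fun
        ((integrableOn_rpow_mul_one_sub_rpow hb hcab).const_mul (Gamma a)) (fun x hx => ?_)
        measurableSet_Ioo
      rw [show c - a - b - 1 = -a + (c - b - 1) by ring, rpow_add (by linarith [hx.2])]
      ring)
    ((ae_restrict_iff' measurableSet_Ioo).2 (ae_of_all _ fun x hx =>
      (hasSum_Gamma_add_mul_pow_div_factorial ha hx.1.le hx.2).mul_right _))
  have hterm : ∀ k : ℕ, ∫ x in Ioo (0:ℝ) 1,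
      Gamma (a + k) * x ^ k / k.factorial * (x ^ (b - 1) * (1 - x) ^ (c - b - 1))
        = Gamma (a + k) / k.factorial * (Gamma (b + k) * Gamma (c - b) / Gamma (c + k)) := by
    intro k
    have hB := integral_rpow_mul_one_sub_rpow (a := b + k) (by positivity) hcb
    rw [show b + k + (c - b) = c + k by ring] at hB
    rw [← hB, ← integral_const_mul]
    refine setIntegral_congr_fun measurableSet_Ioo fun x hx => ?_
    rw [show b + k - 1 = (b - 1) + k by ring, rpow_add hx.1, rpow_natCast]
    ring
  have hlim : ∫ x in Ioo (0:ℝ) 1,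
      Gamma a * (1 - x) ^ (-a) * (x ^ (b - 1) * (1 - x) ^ (c - b - 1))
      = Gamma a * (Gamma b * Gamma (c - a - b) / Gamma (c - a)) := by
    have hB := integral_rpow_mul_one_sub_rpow hb hcab
    rw [add_sub_cancel] at hB
    rw [← hB, ← integral_const_mul]
    refine setIntegral_congr_fun measurableSet_Ioo fun x hx => ?_
    rw [show c - a - b - 1 = -a + (c - b - 1) by ring, rpow_add (by linarith [hx.2])]
    ring
  simp only [hterm, hlim] at hsum
  have hΓ : Gamma (c - b) ≠ 0 := (Gamma_pos_of_pos hcb).ne'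
  convert! hsum.div_const (Gamma (c - b)) using 1
  · funext k
    field_simp
  · ring

theorem integral_rpow_mul_comp_mul_left (f : ℝ → ℝ) (s : ℝ) {c : ℝ} (hc : 0 < c) :
    ∫ t in Ioi 0, t ^ (s - 1) * f (c * t) = c ^ (-s) * ∫ t in Ioi 0, t ^ (s - 1) * f t := by
  have h := integral_comp_mul_left_Ioi (fun t => t ^ (s - 1) * f t) 0 hc
  rw [mul_zero, smul_eq_mul] at h
  calc ∫ t in Ioi 0, t ^ (s - 1) * f (c * t)
      = ∫ t in Ioi 0, c ^ (1 - s) * ((c * t) ^ (s - 1) * f (c * t)) := by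
        refine setIntegral_congr_fun measurableSet_Ioi fun t ht => ?_
        rw [mul_rpow hc.le (le_of_lt ht), ← mul_assoc, ← mul_assoc, ← rpow_add hc]
        simp
    _ = c ^ (-s) * ∫ t in Ioi 0, t ^ (s - 1) * f t := by
        rw [integral_const_mul, h, ← mul_assoc, ← rpow_neg_one, ← rpow_add hc]
        ring_nf

theorem integral_rpow_mul_comp_div_sq (f : ℝ → ℝ) (s : ℝ) {c : ℝ} (hc : 0 < c) :
    ∫ y in Ioi 0, y ^ (-2 * s - 1) * f (c / y ^ 2)
      = c ^ (-s) / 2 * ∫ t in Ioi 0, t ^ (s - 1) * f t := by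
  have h := integral_comp_rpow_Ioi (fun u => u ^ (s - 1) * f (c * u)) (p := -2) (by norm_num)
  calc ∫ y in Ioi 0, y ^ (-2 * s - 1) * f (c / y ^ 2)
      = ∫ y in Ioi 0, 2⁻¹ * ((|(-2 : ℝ)| * y ^ ((-2 : ℝ) - 1)) •
          (fun u => u ^ (s - 1) * f (c * u)) (y ^ (-2 : ℝ))) := by
        refine setIntegral_congr_fun measurableSet_Ioi fun y (hy : 0 < y) => ?_
        have hy2 : y ^ (-2 : ℝ) = (y ^ 2)⁻¹ := by rw [rpow_neg hy.le, rpow_two]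
        simp only [smul_eq_mul]
        rw [← rpow_mul hy.le, hy2, ← div_eq_mul_inv,
          show -2 * s - 1 = (-2 - 1) + -2 * (s - 1) by ring, rpow_add hy, abs_neg, abs_two]
        ring
    _ = c ^ (-s) / 2 * ∫ t in Ioi 0, t ^ (s - 1) * f t := by
        rw [integral_const_mul, h, integral_rpow_mul_comp_mul_left f s hc]
        ring

theorem integrableOn_rpow_mul_exp_neg_mul_div_two_rpow {s p : ℝ} (h : 0 < s + p) :
    IntegrableOn (fun t => t ^ (s - 1) * (exp (-t) * (t / 2) ^ p)) (Ioi 0) := by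
  refine IntegrableOn.congr_fun ((GammaIntegral_convergent h).const_mul (2 ^ p)⁻¹)
    (fun t (ht : 0 < t) => ?_) measurableSet_Ioi
  rw [div_rpow ht.le zero_le_two, show s + p - 1 = (s - 1) + p by ring, rpow_add ht]
  ring

theorem integral_rpow_mul_exp_neg_mul_div_two_rpow {s p : ℝ} (h : 0 < s + p) :
    ∫ t in Ioi 0, t ^ (s - 1) * (exp (-t) * (t / 2) ^ p) = Gamma (s + p) / 2 ^ p := by
  rw [Gamma_eq_integral h, div_eq_inv_mul, ← integral_const_mul]
  refine setIntegral_congr_fun measurableSet_Ioi fun t (ht : 0 < t) => ?_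
  rw [div_rpow ht.le zero_le_two, show s + p - 1 = (s - 1) + p by ring, rpow_add ht]
  ring

theorem Gamma_add_two_mul_div_two_rpow (s ν : ℝ) (k : ℕ) :
    Gamma (ν + s + 2 * k) / 2 ^ (2 * k + ν)
      = 2 ^ (s - 1) / √π * (Gamma ((ν + s) / 2 + k) * Gamma ((ν + s) / 2 + 1 / 2 + k)) := by
  have h := Gamma_mul_Gamma_add_half ((ν + s) / 2 + k)
  rw [show (ν + s) / 2 + k + 1 / 2 = (ν + s) / 2 + 1 / 2 + k by ring,
    show 2 * ((ν + s) / 2 + k) = ν + s + 2 * k by ring] at h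
  have hπ : √π ≠ 0 := (sqrt_pos.2 pi_pos).ne'
  rw [h]
  simp only [rpow_sub two_pos, rpow_add two_pos, rpow_one]
  field_simp

theorem hasSum_Gamma_add_two_mul_div {s ν : ℝ} (hs : s < 1 / 2) (hsν : 0 < ν + s) :
    HasSum
      (fun k : ℕ => Gamma (ν + s + 2 * k) / 2 ^ (2 * k + ν) / (k.factorial * Gamma (k + ν + 1)))
      (Gamma (1 / 2 - s) * Gamma (ν + s) / (2 ^ s * √π * Gamma (ν - s + 1))) := by
  have hsum := (hasSum_Gamma_mul_Gamma_div_factorial_mul_Gamma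
    (a := (ν + s) / 2) (b := (ν + s) / 2 + 1 / 2) (c := ν + 1) (by linarith) (by linarith)
    (by linarith)).mul_left (2 ^ (s - 1) / √π)
  have h1 := Gamma_mul_Gamma_add_half ((ν + s) / 2)
  have h2 := Gamma_mul_Gamma_add_half (ν + 1 - ((ν + s) / 2 + 1 / 2))
  rw [show 2 * ((ν + s) / 2) = ν + s by ring] at h1
  rw [show ν + 1 - ((ν + s) / 2 + 1 / 2) + 1 / 2 = ν + 1 - (ν + s) / 2 by ring,
    show 2 * (ν + 1 - ((ν + s) / 2 + 1 / 2)) = ν - s + 1 by ring] at h2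
  rw [show ν + 1 - (ν + s) / 2 - ((ν + s) / 2 + 1 / 2) = 1 / 2 - s by ring, h1,
    mul_comm (Gamma (ν + 1 - (ν + s) / 2)), h2, show 1 - (ν - s + 1) = s - ν by ring] at hsum
  have hπ : √π ≠ 0 := (sqrt_pos.2 pi_pos).ne'
  have hΓ : Gamma (ν - s + 1) ≠ 0 := (Gamma_pos_of_pos (by linarith)).ne'
  convert! hsum using 1
  · funext k
    rw [Gamma_add_two_mul_div_two_rpow, show (k : ℝ) + ν + 1 = ν + 1 + k by ring]
    ring
  · simp only [rpow_sub two_pos, rpow_add two_pos, rpow_one]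
    field_simp

theorem integral_rpow_mul_exp_neg_mul_besselI {s ν : ℝ} (hs : s < 1 / 2) (hsν : 0 < ν + s) :
    ∫ t in Ioi 0, t ^ (s - 1) * (exp (-t) * besselI ν t)
      = Gamma (1 / 2 - s) * Gamma (ν + s) / (2 ^ s * √π * Gamma (ν - s + 1)) := by
  set F : ℕ → ℝ → ℝ := fun k t => 1 / (k.factorial * Gamma (k + ν + 1)) *
    (t ^ (s - 1) * (exp (-t) * (t / 2) ^ (2 * k + ν)))
  have hpos : ∀ k : ℕ, 0 < s + (2 * k + ν) := fun k => by linarith [k.cast_nonneg (α := ℝ)]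
  have hF_int : ∀ k, Integrable (F k) (volume.restrict (Ioi 0)) := fun k =>
    (integrableOn_rpow_mul_exp_neg_mul_div_two_rpow (hpos k)).const_mul _
  have hF_nonneg : ∀ k, 0 ≤ᵐ[volume.restrict (Ioi 0)] F k := fun k =>
    (ae_restrict_iff' measurableSet_Ioi).2 (ae_of_all _ fun t (ht : 0 < t) => by
      have : 0 < Gamma (k + ν + 1) := Gamma_pos_of_pos (by linarith [k.cast_nonneg (α := ℝ)])
      positivity)
  have hF_integral : ∀ k : ℕ, ∫ t in Ioi 0, F k t
      = Gamma (ν + s + 2 * k) / 2 ^ (2 * k + ν) / (k.factorial * Gamma (k + ν + 1)) := by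
    intro k
    rw [integral_const_mul, integral_rpow_mul_exp_neg_mul_div_two_rpow (hpos k),
      show s + (2 * k + ν) = ν + s + 2 * k by ring]
    ring
  calc ∫ t in Ioi 0, t ^ (s - 1) * (exp (-t) * besselI ν t)
      = ∫ t in Ioi 0, ∑' k, F k t := by
        congr 1; funext t
        rw [besselI, ← tsum_mul_left, ← tsum_mul_left]
        exact tsum_congr fun k => by ring
    _ = _ := integral_tsum_of_nonneg_of_hasSum hF_int hF_nonneg
        (by simpa only [hF_integral] using hasSum_Gamma_add_two_mul_div hs hsν)

/-- Example (3.16): ∫₀^∞ y^(−μ−1) exp(−z²/(2y²)) I_ν(z²/(2y²)) dy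
    = Γ(1/2 − μ/2) Γ(ν + μ/2) / (2√π z^μ Γ(ν − μ/2 + 1)). -/
theorem integral_exp_besselI (z ν μ : ℝ) (hz : 0 < z)
    (hμ : max 0 (-2 * ν) < μ) (hμ1 : μ < 1) :
    ∫ y in Set.Ioi (0:ℝ),
        y ^ (-μ - 1) * Real.exp (-z^2 / (2 * y^2)) * besselI ν (z^2 / (2 * y^2))
      = Real.Gamma (1/2 - μ/2) * Real.Gamma (ν + μ/2) /
          (2 * Real.sqrt π * z ^ μ * Real.Gamma (ν - μ/2 + 1)) := by
  have hνμ : -2 * ν < μ := (le_max_right _ _).trans_lt hμ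
  have hscale : (z ^ 2 / 2) ^ (-(μ / 2)) = 2 ^ (μ / 2) / z ^ μ := by
    rw [rpow_neg (by positivity), div_rpow (sq_nonneg z) zero_le_two, ← rpow_two,
      ← rpow_mul hz.le, inv_div]
    ring_nf
  calc ∫ y in Ioi 0, y ^ (-μ - 1) * exp (-z ^ 2 / (2 * y ^ 2)) * besselI ν (z ^ 2 / (2 * y ^ 2))
      = ∫ y in Ioi 0, y ^ (-2 * (μ / 2) - 1) *
          (fun t => exp (-t) * besselI ν t) (z ^ 2 / 2 / y ^ 2) := by
        congr 1; funext y
        rw [div_div, neg_div, show -2 * (μ / 2) - 1 = -μ - 1 by ring, mul_assoc]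
    _ = (z ^ 2 / 2) ^ (-(μ / 2)) / 2 *
          ∫ t in Ioi 0, t ^ (μ / 2 - 1) * (exp (-t) * besselI ν t) :=
        integral_rpow_mul_comp_div_sq (fun t => exp (-t) * besselI ν t) (μ / 2) (by positivity)
    _ = _ := by
        rw [integral_rpow_mul_exp_neg_mul_besselI (by linarith) (by linarith), hscale]
        have : (0:ℝ) < 2 ^ (μ / 2) := by positivity
        field_simp
end
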